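/- arXiv:1109.6138 — 2 statements merged into one kernel-verified Lean document; each statement's English description precedes it below -/
import Mathlib

section
/- Let a_1,...,a_m be real numbers (m ≥ 2) with ∑ a_i = 0 and ∑ a_i² = b² for some constant b ≥ 0. Then -((m-2)/√(m(m-1))) b³ ≤ ∑ a_i³ ≤ ((m-2)/√(m(m-1))) b³. -/
/-!
Every `a i` is bounded below by `-(m - 1) c` with `c = b / √(m (m - 1))`: by Cauchy–Schwarz applied
to the other `m - 1` entries, which sum to `-a i`, one gets `m (a i)² ≤ (m - 1) b²`. On that range
`(x + (m - 1) c) (x - c)² ≥ 0` bounds `x³` below by a quadratic in `x`; summing it, the linear term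
vanishes and the rest is `-(m - 2) c b²`. The upper bound is the lower bound for `-a`.
-/

open Finset

section OrderedField

variable {ι R : Type*} [Fintype ι] [Field R] [LinearOrder R] [IsStrictOrderedRing R]

theorem card_mul_sq_le_of_sum_eq_zero [DecidableEq ι] (a : ι → R) (hsum : ∑ j, a j = 0) (i : ι) :
    Fintype.card ι * a i ^ 2 ≤ (Fintype.card ι - 1) * ∑ j, a j ^ 2 := by
  have hcard : (({i}ᶜ : Finset ι).card : R) = Fintype.card ι - 1 := by
    rw [card_compl, card_singleton, Nat.cast_sub (Fintype.card_pos_iff.2 ⟨i⟩), Nat.cast_one]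
  have hsplit := sum_compl_add_sum {i} a
  have hsplit_sq := sum_compl_add_sum {i} (a · ^ 2)
  rw [sum_singleton] at hsplit hsplit_sq
  have hrest : ∑ j ∈ {i}ᶜ, a j = -a i := by linear_combination hsplit + hsum
  have hrest_sq : ∑ j ∈ {i}ᶜ, a j ^ 2 = ∑ j, a j ^ 2 - a i ^ 2 := by linear_combination hsplit_sq
  have hcs := sq_sum_le_card_mul_sum_sq (s := ({i}ᶜ : Finset ι)) (f := a)
  rw [hrest, hrest_sq, hcard] at hcs
  linarith

theorem le_sum_pow_three_of_forall_ge (a : ι → R) (hsum : ∑ i, a i = 0) (c : R)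
    (hge : ∀ i, -((Fintype.card ι - 1) * c) ≤ a i) :
    -((Fintype.card ι - 3) * c * ∑ i, a i ^ 2) - Fintype.card ι * (Fintype.card ι - 1) * c ^ 3 ≤
      ∑ i, a i ^ 3 := by
  set n : R := (Fintype.card ι : R)
  have hpoint : ∀ i, -(n - 3) * c * a i ^ 2 + (2 * n - 3) * c ^ 2 * a i - (n - 1) * c ^ 3 ≤
      a i ^ 3 := fun i => by
    nlinarith [mul_nonneg (neg_le_iff_add_nonneg.1 (hge i)) (sq_nonneg (a i - c))]
  calc -((n - 3) * c * ∑ i, a i ^ 2) - n * (n - 1) * c ^ 3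
      = ∑ i, (-(n - 3) * c * a i ^ 2 + (2 * n - 3) * c ^ 2 * a i - (n - 1) * c ^ 3) := by
        simp only [sum_sub_distrib, sum_add_distrib, ← mul_sum, hsum, sum_const, card_univ,
          nsmul_eq_mul]
        ring
    _ ≤ ∑ i, a i ^ 3 := sum_le_sum fun i _ => hpoint i

end OrderedField

theorem sum_pow_three_ge_of_sum_eq_zero {ι : Type*} [Fintype ι] (hcard : 2 ≤ Fintype.card ι)
    (a : ι → ℝ) (b : ℝ) (hb : 0 ≤ b) (hsum : ∑ i, a i = 0) (hsq : ∑ i, a i ^ 2 = b ^ 2) :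
    -(((Fintype.card ι : ℝ) - 2) / √(Fintype.card ι * (Fintype.card ι - 1))) * b ^ 3 ≤
      ∑ i, a i ^ 3 := by
  classical
  have hn : (2 : ℝ) ≤ Fintype.card ι := by exact_mod_cast hcard
  set n : ℝ := (Fintype.card ι : ℝ)
  have hpos : 0 < n * (n - 1) := by nlinarith
  set c := b / √(n * (n - 1))
  have hc : 0 ≤ c := by positivity
  have hcb : n * (n - 1) * c ^ 2 = b ^ 2 := by
    rw [div_pow, Real.sq_sqrt hpos.le, mul_div_cancel₀ _ hpos.ne']
  have hge : ∀ i, -((n - 1) * c) ≤ a i := fun i => by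
    have h := card_mul_sq_le_of_sum_eq_zero a hsum i
    rw [hsq, ← hcb] at h
    refine (abs_le_of_sq_le_sq' ?_ (by nlinarith)).1
    nlinarith
  have h := le_sum_pow_three_of_forall_ge a hsum c hge
  rw [hsq] at h
  calc -((n - 2) / √(n * (n - 1))) * b ^ 3 = -((n - 2) * c * b ^ 2) := by ring
    _ = -((n - 3) * c * b ^ 2) - n * (n - 1) * c ^ 3 := by rw [← hcb]; ring
    _ ≤ ∑ i, a i ^ 3 := h

/-- Okumura-type lemma: if `∑ a i = 0` and `∑ (a i)² = b²` with `b ≥ 0`, then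
`-((m-2)/√(m(m-1))) b³ ≤ ∑ (a i)³ ≤ ((m-2)/√(m(m-1))) b³`. -/
theorem okumura_lemma (m : ℕ) (hm : 2 ≤ m) (a : Fin m → ℝ) (b : ℝ) (hb : 0 ≤ b)
    (hsum : ∑ i, a i = 0) (hsq : ∑ i, (a i) ^ 2 = b ^ 2) :
    -(((m : ℝ) - 2) / Real.sqrt ((m : ℝ) * ((m : ℝ) - 1))) * b ^ 3 ≤ ∑ i, (a i) ^ 3 ∧
      ∑ i, (a i) ^ 3 ≤ (((m : ℝ) - 2) / Real.sqrt ((m : ℝ) * ((m : ℝ) - 1))) * b ^ 3 := by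
  have hcard : 2 ≤ Fintype.card (Fin m) := by rwa [Fintype.card_fin]
  have lower := sum_pow_three_ge_of_sum_eq_zero hcard a b hb hsum hsq
  have upper := sum_pow_three_ge_of_sum_eq_zero hcard (-a) b hb
    (by simp [sum_neg_distrib, hsum]) (by simpa using hsq)
  simp only [Fintype.card_fin, Pi.neg_apply, Odd.neg_pow (by decide : Odd 3), sum_neg_distrib]
    at lower upper
  exact ⟨lower, by linarith⟩
end

section
/- Let m ≥ 3 be an integer and H be a real number with H² > C(m) = ((m-1)(m²+4) + (m-2)√((m-1)(m-2)(m²+m+2)))/(2m³). Define the polynomial P(t) = m(m-1)t² - (3m²-4)H² t + m H² (m² H² - (m-2)²). Then P(t) ≥ P(1) > 0 for all t ≤ 1. -/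
/-!
Write `h = H²`. As a polynomial in `h`, `P(1) = m³h² - (m-1)(m²+4)h + m(m-1)`, whose discriminant is
`(m-2)²(m-1)(m-2)(m²+m+2)`; so `C(m)` is its larger root and `P(1) > 0` once `h > C(m)`.
For `P(t) ≥ P(1)` on `t ≤ 1` it suffices that the vertex `(3m²-4)h / (2m(m-1))` of `P` lies right
of `1`, i.e. that `h` exceeds `h₀ = 2m(m-1)/(3m²-4)`. This holds because `h₀` is not beyond the larger
root: the quadratic in `h` is `-m(m-1)(m-2)³(2m²+m-2)/(3m²-4)² ≤ 0` at `h₀`.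
-/

open Real

theorem quadratic_pos_of_root_lt {a b c x : ℝ} (ha : 0 < a)
    (hx : (-b + √(discrim a b c)) / (2 * a) < x) : 0 < a * (x * x) + b * x + c := by
  have hlt : √(discrim a b c) < 2 * a * x + b := by
    rw [div_lt_iff₀ (by positivity)] at hx
    linarith
  have hD : discrim a b c < (2 * a * x + b) ^ 2 :=
    (sqrt_lt' ((sqrt_nonneg _).trans_lt hlt)).mp hlt
  have hfactor : (2 * a * x + b) ^ 2 - discrim a b c = 4 * a * (a * (x * x) + b * x + c) := by
    rw [discrim]; ring
  have : 0 < 4 * a * (a * (x * x) + b * x + c) := by linarith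
  exact pos_of_mul_pos_right this (by positivity)

theorem le_root_of_quadratic_nonpos {a b c x : ℝ} (ha : 0 < a)
    (hx : a * (x * x) + b * x + c ≤ 0) : x ≤ (-b + √(discrim a b c)) / (2 * a) := by
  contrapose! hx
  exact quadratic_pos_of_root_lt ha hx

theorem antitoneOn_quadratic_Iic {a b c s : ℝ} (ha : 0 ≤ a) (hs : 2 * a * s + b ≤ 0) :
    AntitoneOn (fun x => a * (x * x) + b * x + c) (Set.Iic s) := by
  intro x hx y hy hxy
  have hslope : a * (x + y) + b ≤ 0 := by nlinarith [Set.mem_Iic.mp hx, Set.mem_Iic.mp hy]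
  nlinarith [mul_nonneg (sub_nonneg.mpr hxy) (neg_nonneg.mpr hslope)]

section

variable {M : ℝ}

theorem sqrt_discrim_endpoint (hM : 2 ≤ M) :
    √(discrim (M ^ 3) (-((M - 1) * (M ^ 2 + 4))) (M * (M - 1))) =
      (M - 2) * √((M - 1) * (M - 2) * (M ^ 2 + M + 2)) := by
  have hdiscrim : discrim (M ^ 3) (-((M - 1) * (M ^ 2 + 4))) (M * (M - 1)) =
      (M - 2) ^ 2 * ((M - 1) * (M - 2) * (M ^ 2 + M + 2)) := by
    rw [discrim]; ring
  rw [hdiscrim, sqrt_mul (sq_nonneg _), sqrt_sq (by linarith)]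

theorem endpoint_quadratic_nonpos_at_threshold (hM : 2 ≤ M) {h₀ : ℝ}
    (hh₀ : (3 * M ^ 2 - 4) * h₀ = 2 * M * (M - 1)) :
    M ^ 3 * (h₀ * h₀) + -((M - 1) * (M ^ 2 + 4)) * h₀ + M * (M - 1) ≤ 0 := by
  have hscaled : (3 * M ^ 2 - 4) ^ 2 * (M ^ 3 * (h₀ * h₀) + -((M - 1) * (M ^ 2 + 4)) * h₀ + M * (M - 1)) =
      -(M * (M - 1) * (M - 2) ^ 3 * (2 * M ^ 2 + M - 2)) := by
    linear_combination
      (M ^ 3 * ((3 * M ^ 2 - 4) * h₀ + 2 * M * (M - 1)) - (M - 1) * (M ^ 2 + 4) * (3 * M ^ 2 - 4)) * hh₀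
  have hfactor : 0 ≤ M * (M - 1) * (M - 2) ^ 3 * (2 * M ^ 2 + M - 2) := by
    have h2 : 0 ≤ M - 2 := by linarith
    have : 0 ≤ M * (M - 1) := by nlinarith
    exact mul_nonneg (mul_nonneg this (pow_nonneg h2 3)) (by nlinarith)
  have hk : 0 < (3 * M ^ 2 - 4) ^ 2 := by nlinarith
  nlinarith

theorem threshold_lt_of_root_lt {h : ℝ} (hM : 2 ≤ M)
    (hh : (-(-((M - 1) * (M ^ 2 + 4))) +
      √(discrim (M ^ 3) (-((M - 1) * (M ^ 2 + 4))) (M * (M - 1)))) / (2 * M ^ 3) < h) :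
    2 * M * (M - 1) < (3 * M ^ 2 - 4) * h := by
  have hk : 0 < 3 * M ^ 2 - 4 := by nlinarith
  have hh₀ : (3 * M ^ 2 - 4) * (2 * M * (M - 1) / (3 * M ^ 2 - 4)) = 2 * M * (M - 1) :=
    mul_div_cancel₀ _ hk.ne'
  have hthreshold := (le_root_of_quadratic_nonpos (pow_pos (by linarith) 3)
    (endpoint_quadratic_nonpos_at_threshold hM hh₀)).trans_lt hh
  calc 2 * M * (M - 1) = (3 * M ^ 2 - 4) * (2 * M * (M - 1) / (3 * M ^ 2 - 4)) := hh₀.symm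
    _ < (3 * M ^ 2 - 4) * h := mul_lt_mul_of_pos_left hthreshold hk

end

/-- If `m ≥ 3` and `H² > C(m)`, then the polynomial
`P(t) = m(m-1)t² - (3m²-4)H² t + m H² (m² H² - (m-2)²)` satisfies `P(t) ≥ P(1) > 0`
for all `t ≤ 1`. -/
theorem poly_estimate (m : ℕ) (hm : 3 ≤ m) (H : ℝ)
    (hH : H ^ 2 >
      (((m : ℝ) - 1) * ((m : ℝ) ^ 2 + 4) +
          ((m : ℝ) - 2) * Real.sqrt (((m : ℝ) - 1) * ((m : ℝ) - 2) * ((m : ℝ) ^ 2 + (m : ℝ) + 2))) /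
        (2 * (m : ℝ) ^ 3))
    (P : ℝ → ℝ)
    (hP : ∀ t : ℝ, P t = (m : ℝ) * ((m : ℝ) - 1) * t ^ 2 - (3 * (m : ℝ) ^ 2 - 4) * H ^ 2 * t +
      (m : ℝ) * H ^ 2 * ((m : ℝ) ^ 2 * H ^ 2 - ((m : ℝ) - 2) ^ 2)) :
    ∀ t : ℝ, t ≤ 1 → P t ≥ P 1 ∧ P 1 > 0 := by
  intro t ht
  have hM : (2 : ℝ) ≤ m := by exact_mod_cast (by omega : 2 ≤ m)
  set M : ℝ := (m : ℝ)
  have hroot : (-(-((M - 1) * (M ^ 2 + 4))) +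
      √(discrim (M ^ 3) (-((M - 1) * (M ^ 2 + 4))) (M * (M - 1)))) / (2 * M ^ 3) < H ^ 2 := by
    rwa [sqrt_discrim_endpoint hM, neg_neg]
  have hpos := quadratic_pos_of_root_lt (pow_pos (by linarith) 3) hroot
  have hvertex : 2 * (M * (M - 1)) * 1 + -((3 * M ^ 2 - 4) * H ^ 2) ≤ 0 := by
    linarith [threshold_lt_of_root_lt hM hroot]
  have hmono := antitoneOn_quadratic_Iic (c := M * H ^ 2 * (M ^ 2 * H ^ 2 - (M - 2) ^ 2))
    (by nlinarith) hvertex ht Set.self_mem_Iic ht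
  rw [hP, hP]
  constructor
  · linear_combination hmono
  · linear_combination hpos
end
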